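/- Let G = (V,E) be a finite cavity-monotone network and for each t > 0 let x(t) be the unique solution of the cavity equation x = tΓ_G(x). Then t ↦ x(t) is coordinatewise nondecreasing and t ↦ x(t)/t is coordinatewise nonincreasing on (0,∞); consequently, for 0 < s ≤ t one has (s/t)·x(t) ≤ x(s) ≤ x(t) coordinatewise, and the map t ↦ x(t) is continuous on (0,∞). -/

import Mathlib

open Finset Filter
open scoped Classical ENNReal

section LocalDefs

variable {V : Type*} [DecidableEq V]

/-- Generating polynomial `Z(w) = Σ_{S ⊆ A} ν(S) ∏_{k∈S} w_k` of a measure `ν`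
on the subsets of the ground set `A`. -/
noncomputable def lZ (A : Finset V) (ν : Finset V → ℝ) (w : V → ℝ) : ℝ :=
  ∑ S ∈ A.powerset, ν S * ∏ k ∈ S, w k

/-- Gibbs--Boltzmann probability of the event `p` under external field `w`. -/
noncomputable def lProb (A : Finset V) (ν : Finset V → ℝ) (w : V → ℝ)
    (p : Finset V → Prop) : ℝ :=
  (∑ S ∈ A.powerset.filter p, ν S * ∏ k ∈ S, w k) / lZ A ν w

/-- The energy `U_ν(w)`, i.e. the expected cardinality of the random subset. -/
noncomputable def lEnergy (A : Finset V) (ν : Finset V → ℝ) (w : V → ℝ) : ℝ :=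
  (∑ S ∈ A.powerset, (S.card : ℝ) * ν S * ∏ k ∈ S, w k) / lZ A ν w

/-- `E^w_ν[|𝓕|·1_{e∈𝓕}]`. -/
noncomputable def lEnergyIn (A : Finset V) (ν : Finset V → ℝ) (e : V) (w : V → ℝ) : ℝ :=
  (∑ S ∈ A.powerset.filter (fun S => e ∈ S), (S.card : ℝ) * ν S * ∏ k ∈ S, w k) / lZ A ν w

/-- The cavity ratio `Γ^e_ν(w') = Z^{/e}(w') / Z^{∖e}(w')`; it only depends on the
coordinates of `w` different from `e`. -/
noncomputable def lGamma (A : Finset V) (ν : Finset V → ℝ) (e : V) (w : V → ℝ) : ℝ :=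
  (∑ S ∈ (A.erase e).powerset, ν (insert e S) * ∏ k ∈ S, w k) /
  (∑ S ∈ (A.erase e).powerset, ν S * ∏ k ∈ S, w k)

/-- Rayleigh property: pairwise negative correlation under every positive external field. -/
def lRayleigh (A : Finset V) (ν : Finset V → ℝ) : Prop :=
  ∀ w : V → ℝ, (∀ k ∈ A, 0 < w k) → ∀ e ∈ A, ∀ f ∈ A, e ≠ f →
    lProb A ν w (fun S => e ∈ S ∧ f ∈ S) ≤
      lProb A ν w (fun S => e ∈ S) * lProb A ν w (fun S => f ∈ S)

/-- Size-increasing property: every ground element positively influences the total size. -/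
def lSizeInc (A : Finset V) (ν : Finset V → ℝ) : Prop :=
  ∀ w : V → ℝ, (∀ k ∈ A, 0 < w k) → ∀ e ∈ A,
    lEnergy A ν w * lProb A ν w (fun S => e ∈ S) < lEnergyIn A ν e w

/-- Cavity-monotone: nonnegative, `ν(∅) > 0`, Rayleigh and size-increasing. -/
def lCavityMonotone (A : Finset V) (ν : Finset V → ℝ) : Prop :=
  (∀ S ∈ A.powerset, 0 ≤ ν S) ∧ 0 < ν ∅ ∧ lRayleigh A ν ∧ lSizeInc A ν

end LocalDefs

section NetworkDefs

variable {V : Type*} [DecidableEq V]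

/-- The cavity operator: `(Γ_G x)_{i→j}` is the cavity ratio of the local measure `μ i`
at the edge `ij`, with external field `(x_{k→i} : k ∈ ∂i ∖ {j})`.  Local measures are
encoded as functions of the set of neighbours selected. -/
noncomputable def cavOp (G : SimpleGraph V) [G.LocallyFinite]
    (μ : V → Finset V → ℝ) (x : V → V → ℝ) (i j : V) : ℝ :=
  (∑ S ∈ ((G.neighborFinset i).erase j).powerset, μ i (insert j S) * ∏ k ∈ S, x k i) /
  (∑ S ∈ ((G.neighborFinset i).erase j).powerset, μ i S * ∏ k ∈ S, x k i)

/-- One step of the cavity iteration at activity `t` : `x ↦ t Γ_G(x)`. -/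
noncomputable def cavStep (G : SimpleGraph V) [G.LocallyFinite]
    (μ : V → Finset V → ℝ) (t : ℝ) (x : V → V → ℝ) : V → V → ℝ :=
  fun i j => t * cavOp G μ x i j

/-- The neighbours `k` of `i` such that the edge `ik` belongs to the spanning subgraph `F`;
this encodes `F ∩ E_i` as a set of neighbours. -/
noncomputable def nbrsIn (G : SimpleGraph V) [G.LocallyFinite]
    (F : Finset (Sym2 V)) (i : V) : Finset V :=
  (G.neighborFinset i).filter (fun k => s(i, k) ∈ F)

variable [Fintype V]

/-- Global measure `μ(F) = ∏_i μ_i(F ∩ E_i)` of a spanning subgraph `F`. -/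
noncomputable def gWeight (G : SimpleGraph V) [DecidableRel G.Adj]
    (μ : V → Finset V → ℝ) (F : Finset (Sym2 V)) : ℝ :=
  ∏ i : V, μ i (nbrsIn G F i)

/-- Partition function `Z(G;t) = Σ_{F ⊆ E} μ(F) t^{|F|}`. -/
noncomputable def ZG (G : SimpleGraph V) [DecidableRel G.Adj]
    (μ : V → Finset V → ℝ) (t : ℝ) : ℝ :=
  ∑ F ∈ G.edgeFinset.powerset, gWeight G μ F * t ^ F.card

/-- Gibbs--Boltzmann probability of the event `p` at activity `t`. -/
noncomputable def gProb (G : SimpleGraph V) [DecidableRel G.Adj]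
    (μ : V → Finset V → ℝ) (t : ℝ) (p : Finset (Sym2 V) → Prop) : ℝ :=
  (∑ F ∈ G.edgeFinset.powerset.filter p, gWeight G μ F * t ^ F.card) / ZG G μ t

/-- Energy `U(G;t)`, the expected size of the random spanning subgraph. -/
noncomputable def UG (G : SimpleGraph V) [DecidableRel G.Adj]
    (μ : V → Finset V → ℝ) (t : ℝ) : ℝ :=
  (∑ F ∈ G.edgeFinset.powerset, (F.card : ℝ) * gWeight G μ F * t ^ F.card) / ZG G μ t

/-- `M(G)`, the maximum size of a spanning subgraph with positive weight. -/
noncomputable def MG (G : SimpleGraph V) [DecidableRel G.Adj]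
    (μ : V → Finset V → ℝ) : ℕ :=
  (G.edgeFinset.powerset.filter (fun F => 0 < gWeight G μ F)).sup Finset.card

end NetworkDefs

/-
The Rayleigh property makes each cavity ratio `Γ^e` antitone in the external field: as a function
of one weight `x` it is a Möbius map `(a + x b) / (c + x d)` with `b c ≤ a d`.  The size-increasing
property makes `r ↦ r Γ^e(r w)` strictly increasing: the numerator of its derivative is exactly the
size-increasing inequality at the field `r w`.  For `s ≤ t` these two facts, applied at the oriented
edges where `x(s) / x(t)` is largest and smallest, rule out `x(s) / x(t) > 1` anywhere.  Then
`x(s) = s Γ(x(s)) ≥ s Γ(x(t)) = (s / t) x(t)`, and the two-sided bound makes `x` locally Lipschitz.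
The ratios make sense because the solutions are positive, which rests on `μ_i({e}) > 0`; that in
turn follows from the Rayleigh and size-increasing properties.
-/

section GeneratingPolynomial

variable {V : Type*} [DecidableEq V] {A B S : Finset V} {e f : V} (ν : Finset V → ℝ) (w : V → ℝ)

noncomputable def lSizeSum (A : Finset V) (ν : Finset V → ℝ) (w : V → ℝ) : ℝ :=
  ∑ S ∈ A.powerset, (S.card : ℝ) * ν S * ∏ k ∈ S, w k

omit [DecidableEq V] in
lemma lZ_congr {w' : V → ℝ} (h : ∀ k ∈ B, w k = w' k) : lZ B ν w = lZ B ν w' :=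
  sum_congr rfl fun S hS => by
    rw [prod_congr rfl fun k hk => h k (mem_powerset.1 hS hk)]

lemma lZ_update_of_notMem (hf : f ∉ B) (c : ℝ) : lZ B ν (Function.update w f c) = lZ B ν w :=
  lZ_congr ν _ fun _ hk => Function.update_of_ne (ne_of_mem_of_not_mem hk hf) _ _

omit [DecidableEq V] in
lemma lZ_const (ε : ℝ) : lZ B ν (fun _ => ε) = ∑ S ∈ B.powerset, ν S * ε ^ S.card := by
  simp only [lZ, prod_const]

omit [DecidableEq V] in
lemma lZ_nonneg (hν : ∀ S ∈ B.powerset, 0 ≤ ν S) (hw : ∀ k ∈ B, 0 ≤ w k) : 0 ≤ lZ B ν w :=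
  sum_nonneg fun S hS => mul_nonneg (hν S hS) (prod_nonneg fun k hk => hw k (mem_powerset.1 hS hk))

omit [DecidableEq V] in
lemma lZ_pos (hν : ∀ S ∈ B.powerset, 0 ≤ ν S) (h0 : 0 < ν ∅) (hw : ∀ k ∈ B, 0 ≤ w k) :
    0 < lZ B ν w := by
  refine h0.trans_le ?_
  rw [lZ]
  have hterm : ∀ S ∈ B.powerset, 0 ≤ ν S * ∏ k ∈ S, w k := fun S hS =>
    mul_nonneg (hν S hS) (prod_nonneg fun k hk => hw k (mem_powerset.1 hS hk))
  simpa using single_le_sum hterm (empty_mem_powerset B)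

lemma contract_nonneg (hν : ∀ S ∈ A.powerset, 0 ≤ ν S) (he : e ∈ A) :
    ∀ S ∈ (A.erase e).powerset, 0 ≤ ν (insert e S) := fun _ hS =>
  hν _ (mem_powerset.2 (insert_subset he ((mem_powerset.1 hS).trans (erase_subset e A))))

lemma sum_powerset_eq_add_sum_insert (he : e ∈ A) (g : Finset V → ℝ) :
    ∑ S ∈ A.powerset, g S =
      ∑ S ∈ (A.erase e).powerset, g S + ∑ S ∈ (A.erase e).powerset, g (insert e S) := by
  conv_lhs => rw [← insert_erase he]
  exact sum_powerset_insert (notMem_erase e A) g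

lemma sum_powerset_filter_mem (he : e ∈ A) [hd : DecidablePred fun S : Finset V => e ∈ S]
    (g : Finset V → ℝ) :
    ∑ S ∈ A.powerset with e ∈ S, g S = ∑ S ∈ (A.erase e).powerset, g (insert e S) := by
  rw [sum_filter, sum_powerset_eq_add_sum_insert he]
  have hzero : ∀ S ∈ (A.erase e).powerset, (if e ∈ S then g S else 0) = 0 := fun S hS =>
    if_neg (notMem_of_mem_powerset_of_notMem hS (notMem_erase e A))
  rw [sum_congr rfl hzero, sum_const_zero, zero_add]
  exact sum_congr rfl fun S _ => if_pos (mem_insert_self e S)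

lemma prod_insert_of_mem_powerset_erase (hS : S ∈ (A.erase e).powerset) :
    ∏ k ∈ insert e S, w k = w e * ∏ k ∈ S, w k :=
  prod_insert (notMem_of_mem_powerset_of_notMem hS (notMem_erase e A))

lemma lZ_eq_add (he : e ∈ A) :
    lZ A ν w = lZ (A.erase e) ν w + w e * lZ (A.erase e) (fun S => ν (insert e S)) w := by
  rw [lZ, sum_powerset_eq_add_sum_insert he, lZ, lZ, mul_sum]
  congr 1
  refine sum_congr rfl fun S hS => ?_
  rw [prod_insert_of_mem_powerset_erase w hS]
  ring

lemma lSizeSum_eq_add (he : e ∈ A) :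
    lSizeSum A ν w = lSizeSum (A.erase e) ν w + w e *
      (lSizeSum (A.erase e) (fun S => ν (insert e S)) w +
        lZ (A.erase e) (fun S => ν (insert e S)) w) := by
  rw [lSizeSum, sum_powerset_eq_add_sum_insert he, lSizeSum, lSizeSum, lZ]
  congr 1
  rw [← sum_add_distrib, mul_sum]
  refine sum_congr rfl fun S hS => ?_
  rw [prod_insert_of_mem_powerset_erase w hS,
    card_insert_of_notMem (notMem_of_mem_powerset_of_notMem hS (notMem_erase e A))]
  push_cast
  ring

omit [DecidableEq V] in
lemma lEnergy_eq : lEnergy A ν w = lSizeSum A ν w / lZ A ν w := rfl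

lemma lProb_mem (he : e ∈ A) :
    lProb A ν w (fun S => e ∈ S) = w e * lZ (A.erase e) (fun S => ν (insert e S)) w / lZ A ν w := by
  -- `lProb` decides its event classically; `hd := _` lets unification pick that instance
  rw [lProb, sum_powerset_filter_mem he (hd := _)]
  congr 1
  rw [lZ, mul_sum]
  refine sum_congr rfl fun S hS => ?_
  rw [prod_insert_of_mem_powerset_erase w hS]
  ring

lemma lProb_mem_and_mem (he : e ∈ A) (hf : f ∈ A.erase e) :
    lProb A ν w (fun S => e ∈ S ∧ f ∈ S) =
      w e * w f * lZ ((A.erase e).erase f) (fun S => ν (insert e (insert f S))) w / lZ A ν w := by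
  rw [lProb]
  congr 1
  rw [sum_filter]
  trans ∑ S ∈ A.powerset, if e ∈ S then (if f ∈ S then ν S * ∏ k ∈ S, w k else 0) else 0
  · exact sum_congr rfl fun S _ => by split_ifs <;> tauto
  rw [← sum_filter, sum_powerset_filter_mem he]
  simp_rw [mem_insert, ne_of_mem_erase hf, false_or]
  rw [← sum_filter, sum_powerset_filter_mem hf (hd := _), lZ, mul_sum]
  refine sum_congr rfl fun S hS => ?_
  have hfS : insert f S ∈ (A.erase e).powerset :=
    mem_powerset.2 (insert_subset hf ((mem_powerset.1 hS).trans (erase_subset f _)))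
  rw [prod_insert_of_mem_powerset_erase w hfS, prod_insert_of_mem_powerset_erase w hS]
  ring

lemma lEnergyIn_eq (he : e ∈ A) :
    lEnergyIn A ν e w = w e * (lSizeSum (A.erase e) (fun S => ν (insert e S)) w +
      lZ (A.erase e) (fun S => ν (insert e S)) w) / lZ A ν w := by
  rw [lEnergyIn, sum_powerset_filter_mem he]
  congr 1
  rw [lSizeSum, lZ, ← sum_add_distrib, mul_sum]
  refine sum_congr rfl fun S hS => ?_
  rw [prod_insert_of_mem_powerset_erase w hS,
    card_insert_of_notMem (notMem_of_mem_powerset_of_notMem hS (notMem_erase e A))]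
  push_cast
  ring

end GeneratingPolynomial

section CoefficientInequalities

variable {V : Type*} [DecidableEq V] {A : Finset V} {ν : Finset V → ℝ} {w : V → ℝ} {e f : V}

lemma lRayleigh.lZ_mul_lZ_le (hR : lRayleigh A ν) (hw : ∀ k ∈ A, 0 < w k) (hZ : 0 < lZ A ν w)
    (he : e ∈ A) (hf : f ∈ A.erase e) :
    lZ ((A.erase e).erase f) (fun S => ν (insert e (insert f S))) w *
        lZ ((A.erase e).erase f) ν w ≤
      lZ ((A.erase e).erase f) (fun S => ν (insert e S)) w *
        lZ ((A.erase e).erase f) (fun S => ν (insert f S)) w := by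
  have hfA : f ∈ A := mem_of_mem_erase hf
  have heAf : e ∈ A.erase f := mem_erase.2 ⟨(ne_of_mem_erase hf).symm, he⟩
  have hray := hR w hw e he f hfA (ne_of_mem_erase hf).symm
  rw [lProb_mem_and_mem ν w he hf, lProb_mem ν w he, lProb_mem ν w hfA,
    lZ_eq_add (fun S => ν (insert e S)) w hf, lZ_eq_add (fun S => ν (insert f S)) w heAf,
    erase_right_comm (a := f)] at hray
  simp only [insert_comm f e] at hray
  have hZ' := lZ_eq_add ν w he
  rw [lZ_eq_add ν w hf, lZ_eq_add (fun S => ν (insert e S)) w hf] at hZ'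
  set a := lZ ((A.erase e).erase f) (fun S => ν (insert e S)) w
  set b := lZ ((A.erase e).erase f) (fun S => ν (insert e (insert f S))) w
  set c := lZ ((A.erase e).erase f) ν w
  set d := lZ ((A.erase e).erase f) (fun S => ν (insert f S)) w
  set Z := lZ A ν w
  have hwe := hw e he
  have hwf := hw f hfA
  rw [div_mul_div_comm, div_le_div_iff₀ hZ (by positivity)] at hray
  have h : w e * w f * Z * (b * Z) ≤ w e * w f * Z * ((a + w f * b) * (d + w e * b)) := by
    linear_combination hray
  have h' := le_of_mul_le_mul_left h (by positivity)
  rw [hZ'] at h'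
  linear_combination h'

lemma lSizeInc.lSizeSum_mul_lZ_lt (hSI : lSizeInc A ν) (hw : ∀ k ∈ A, 0 < w k) (hZ : 0 < lZ A ν w)
    (he : e ∈ A) :
    lSizeSum (A.erase e) ν w * lZ (A.erase e) (fun S => ν (insert e S)) w <
      (lSizeSum (A.erase e) (fun S => ν (insert e S)) w +
        lZ (A.erase e) (fun S => ν (insert e S)) w) * lZ (A.erase e) ν w := by
  have hsi := hSI w hw e he
  rw [lEnergy_eq, lProb_mem ν w he, lEnergyIn_eq ν w he, lSizeSum_eq_add ν w he] at hsi
  have hZ' := lZ_eq_add ν w he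
  set M := lSizeSum (A.erase e) ν w
  set E := lSizeSum (A.erase e) (fun S => ν (insert e S)) w
  set N := lZ (A.erase e) (fun S => ν (insert e S)) w
  set D := lZ (A.erase e) ν w
  set Z := lZ A ν w
  have hwe := hw e he
  rw [div_mul_div_comm, div_lt_div_iff₀ (by positivity) hZ] at hsi
  have h : w e * Z * (M * N) < w e * Z * ((E + N) * D) := by
    rw [hZ'] at hsi ⊢
    linear_combination hsi
  exact lt_of_mul_lt_mul_left h (by positivity)

end CoefficientInequalities

section CavityRatio

variable {V : Type*} [DecidableEq V] {A : Finset V} {ν : Finset V → ℝ} {w w' : V → ℝ} {e f : V}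

lemma lGamma_eq : lGamma A ν e w =
    lZ (A.erase e) (fun S => ν (insert e S)) w / lZ (A.erase e) ν w := rfl

lemma lGamma_congr (h : ∀ k ∈ A.erase e, w k = w' k) : lGamma A ν e w = lGamma A ν e w' := by
  rw [lGamma_eq, lGamma_eq, lZ_congr _ _ h, lZ_congr _ _ h]

lemma lGamma_pos (hν : ∀ S ∈ A.powerset, 0 ≤ ν S) (h0 : 0 < ν ∅) (he : e ∈ A)
    (hsingle : 0 < ν {e}) (hw : ∀ k ∈ A.erase e, 0 ≤ w k) : 0 < lGamma A ν e w :=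
  div_pos (lZ_pos _ _ (contract_nonneg ν hν he) (by simpa using hsingle) hw)
    (lZ_pos _ _ (fun S hS => hν S (powerset_mono.2 (erase_subset e A) hS)) h0 hw)

lemma lGamma_update_le (hν : ∀ S ∈ A.powerset, 0 ≤ ν S) (h0 : 0 < ν ∅) (hR : lRayleigh A ν)
    (he : e ∈ A) (hw : ∀ k ∈ A, 0 < w k) {c : ℝ} (hc : w f ≤ c) :
    lGamma A ν e (Function.update w f c) ≤ lGamma A ν e w := by
  by_cases hf : f ∈ A.erase e
  · have hbc := hR.lZ_mul_lZ_le hw (lZ_pos _ _ hν h0 fun k hk => (hw k hk).le) he hf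
    have hC : f ∉ (A.erase e).erase f := notMem_erase f _
    rw [lGamma_eq, lGamma_eq, lZ_eq_add (fun S => ν (insert e S)) w hf,
      lZ_eq_add (fun S => ν (insert e S)) (Function.update w f c) hf,
      lZ_eq_add ν w hf, lZ_eq_add ν (Function.update w f c) hf]
    simp only [lZ_update_of_notMem _ _ hC, Function.update_self]
    set a := lZ ((A.erase e).erase f) (fun S => ν (insert e S)) w
    set b := lZ ((A.erase e).erase f) (fun S => ν (insert e (insert f S))) w
    set d := lZ ((A.erase e).erase f) (fun S => ν (insert f S)) w
    set c₀ := lZ ((A.erase e).erase f) ν w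
    have hwf : 0 < w f := hw f (mem_of_mem_erase hf)
    have hc₀ : 0 < c₀ := lZ_pos _ _ (fun S hS => hν S (powerset_mono.2
      ((erase_subset f _).trans (erase_subset e A)) hS)) h0 fun k hk =>
        (hw k (mem_of_mem_erase (mem_of_mem_erase hk))).le
    have hd : 0 ≤ d := lZ_nonneg _ _ (contract_nonneg ν (fun S hS => hν S
      (powerset_mono.2 (erase_subset e A) hS)) hf) fun k hk =>
        (hw k (mem_of_mem_erase (mem_of_mem_erase hk))).le
    have hc' : 0 < c := hwf.trans_le hc
    rw [div_le_div_iff₀ (by positivity) (by positivity)]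
    nlinarith [mul_le_mul_of_nonneg_left hbc (sub_nonneg.2 hc)]
  · exact (lGamma_congr fun k hk => Function.update_of_ne (ne_of_mem_of_not_mem hk hf) _ _).le

lemma lGamma_antitone (hν : ∀ S ∈ A.powerset, 0 ≤ ν S) (h0 : 0 < ν ∅) (hR : lRayleigh A ν)
    (he : e ∈ A) (hw : ∀ k ∈ A, 0 < w k) (hle : ∀ k ∈ A, w k ≤ w' k) :
    lGamma A ν e w' ≤ lGamma A ν e w := by
  suffices h : ∀ D ⊆ A, lGamma A ν e (D.piecewise w' w) ≤ lGamma A ν e w by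
    refine le_of_eq_of_le (lGamma_congr fun k hk => ?_) (h A subset_rfl)
    exact (piecewise_eq_of_mem _ _ _ (mem_of_mem_erase hk)).symm
  intro D
  induction D using Finset.induction_on with
  | empty => simp
  | insert f D hfD ih =>
    intro hsub
    have hpos : ∀ k ∈ A, 0 < D.piecewise w' w k := fun k hk => by
      by_cases hkD : k ∈ D
      · rw [piecewise_eq_of_mem _ _ _ hkD]; exact (hw k hk).trans_le (hle k hk)
      · rw [piecewise_eq_of_notMem _ _ _ hkD]; exact hw k hk
    have hf : D.piecewise w' w f ≤ w' f := by
      rw [piecewise_eq_of_notMem _ _ _ hfD]; exact hle f (hsub (mem_insert_self f D))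
    rw [piecewise_insert]
    exact (lGamma_update_le hν h0 hR he hpos hf).trans (ih ((subset_insert f D).trans hsub))

end CavityRatio

section Scaling

lemma hasDerivAt_lZ_smul {V : Type*} (B : Finset V) (ν : Finset V → ℝ) (w : V → ℝ) {r : ℝ} (hr : r ≠ 0) :
    HasDerivAt (fun r : ℝ => lZ B ν (r • w)) (lSizeSum B ν (r • w) / r) r := by
  have hprod : ∀ (r : ℝ) (S : Finset V), ∏ k ∈ S, (r • w) k = r ^ S.card * ∏ k ∈ S, w k :=
    fun r S => by simp only [Pi.smul_apply, smul_eq_mul, prod_mul_distrib, prod_const]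
  have hfun : (fun r : ℝ => lZ B ν (r • w)) =
      fun r => ∑ S ∈ B.powerset, (ν S * ∏ k ∈ S, w k) * r ^ S.card := by
    funext r
    exact sum_congr rfl fun S _ => by rw [hprod]; ring
  rw [hfun]
  refine (HasDerivAt.fun_sum fun S _ =>
    (hasDerivAt_pow S.card r).const_mul (ν S * ∏ k ∈ S, w k)).congr_deriv ?_
  rw [lSizeSum, sum_div]
  refine sum_congr rfl fun S _ => ?_
  rw [hprod]
  rcases S.card with _ | n
  · simp
  · field_simp
    push_cast
    ring

variable {V : Type*} [DecidableEq V] {A : Finset V} {ν : Finset V → ℝ} {e : V}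

lemma lGamma_smul_strictMonoOn (hν : ∀ S ∈ A.powerset, 0 ≤ ν S) (h0 : 0 < ν ∅)
    (hSI : lSizeInc A ν) (he : e ∈ A) {w : V → ℝ} (hw : ∀ k ∈ A, 0 < w k) :
    StrictMonoOn (fun r : ℝ => r * lGamma A ν e (r • w)) (Set.Ioi 0) := by
  have hpos : ∀ r : ℝ, 0 < r → ∀ k ∈ A, 0 < (r • w) k := fun r hr k hk => mul_pos hr (hw k hk)
  have hD : ∀ r : ℝ, 0 < r → 0 < lZ (A.erase e) ν (r • w) := fun r hr => lZ_pos _ _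
    (fun S hS => hν S (powerset_mono.2 (erase_subset e A) hS)) h0
    fun k hk => (hpos r hr k (mem_of_mem_erase hk)).le
  have hderiv : ∀ r : ℝ, 0 < r → HasDerivAt (fun r : ℝ => r * lGamma A ν e (r • w))
      (((lSizeSum (A.erase e) (fun S => ν (insert e S)) (r • w) +
          lZ (A.erase e) (fun S => ν (insert e S)) (r • w)) * lZ (A.erase e) ν (r • w) -
        lZ (A.erase e) (fun S => ν (insert e S)) (r • w) * lSizeSum (A.erase e) ν (r • w)) /
          lZ (A.erase e) ν (r • w) ^ 2) r := fun r hr => by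
    refine ((hasDerivAt_id r).mul ((hasDerivAt_lZ_smul _ (fun S => ν (insert e S)) w hr.ne').div
      (hasDerivAt_lZ_smul _ ν w hr.ne') (hD r hr).ne')).congr_deriv ?_
    have := (hD r hr).ne'
    simp only [Pi.div_apply, id]
    field_simp
    ring
  refine strictMonoOn_of_deriv_pos (convex_Ioi 0)
    (fun r hr => (hderiv r hr).continuousAt.continuousWithinAt) fun r hr => ?_
  rw [interior_Ioi] at hr
  rw [(hderiv r hr).deriv]
  have hsi := hSI.lSizeSum_mul_lZ_lt (hpos r hr)
    (lZ_pos _ _ hν h0 fun k hk => (hpos r hr k hk).le) he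
  exact div_pos (by linarith) (pow_pos (hD r hr) 2)

end Scaling

section Singletons

lemma sum_mul_pow_le_pow_mul_sum {ι : Type*} {s : Finset ι} {g : ι → ℝ} {c : ι → ℕ} {ε : ℝ}
    {n : ℕ} (hg : ∀ i ∈ s, 0 ≤ g i) (hε0 : 0 ≤ ε) (hε1 : ε ≤ 1)
    (hn : ∀ i ∈ s, g i ≠ 0 → n ≤ c i) :
    ∑ i ∈ s, g i * ε ^ c i ≤ ε ^ n * ∑ i ∈ s, g i := by
  rw [mul_sum]
  refine sum_le_sum fun i hi => ?_
  by_cases h : g i = 0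
  · simp [h]
  · rw [mul_comm]
    exact mul_le_mul_of_nonneg_right (pow_le_pow_of_le_one hε0 hε1 (hn i hi h)) (hg i hi)

lemma exists_pos_le_one_mul_lt {a b : ℝ} (ha : 0 < a) (hb : 0 ≤ b) :
    ∃ ε : ℝ, 0 < ε ∧ ε ≤ 1 ∧ ε * b < a := by
  obtain ⟨c, hc, hcb⟩ := exists_pos_mul_lt ha b
  exact ⟨min c 1, lt_min hc one_pos, min_le_right c 1,
    (mul_le_mul_of_nonneg_right (min_le_left c 1) hb).trans_lt (by linarith)⟩

variable {V : Type*} [DecidableEq V] {A R S : Finset V} {ν : Finset V → ℝ} {e f : V}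

lemma lSizeInc.exists_mem_pos (hν : ∀ S ∈ A.powerset, 0 ≤ ν S) (hSI : lSizeInc A ν)
    (he : e ∈ A) : ∃ S ∈ A.powerset, e ∈ S ∧ 0 < ν S := by
  by_contra! h
  have hzero : ∀ S ∈ (A.erase e).powerset, ν (insert e S) = 0 := fun S hS =>
    le_antisymm (h _ (mem_powerset.2 (insert_subset he
      ((mem_powerset.1 hS).trans (erase_subset e A)))) (mem_insert_self e S))
      (contract_nonneg ν hν he S hS)
  have hsi := hSI (fun _ => 1) (fun _ _ => one_pos) e he
  rw [lProb_mem ν _ he, lEnergyIn_eq ν _ he, lZ, lSizeSum,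
    sum_eq_zero fun S hS => by rw [hzero S hS, zero_mul],
    sum_eq_zero fun S hS => by rw [hzero S hS, mul_zero, zero_mul]] at hsi
  simp at hsi

/- With all weights equal to a small `ε`, the left side of `lRayleigh.lZ_mul_lZ_le` is at least
of order `ε ^ R.card`, while its right side is `O(ε ^ (R.card + 1))` unless `ν (insert e T) > 0`
for some `T` no larger than `R`. -/
lemma lRayleigh.exists_pos_insert_card_le (hν : ∀ S ∈ A.powerset, 0 ≤ ν S) (h0 : 0 < ν ∅)
    (hR : lRayleigh A ν) (he : e ∈ A) (hf : f ∈ A.erase e)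
    (hRC : R ∈ ((A.erase e).erase f).powerset) (hpos : 0 < ν (insert e (insert f R))) :
    ∃ T ∈ ((A.erase e).erase f).powerset, 0 < ν (insert e T) ∧ T.card ≤ R.card := by
  by_contra! hmin
  set C := (A.erase e).erase f
  have hνC : ∀ T ∈ C.powerset, 0 ≤ ν T := fun T hT =>
    hν T (powerset_mono.2 ((erase_subset f _).trans (erase_subset e A)) hT)
  have hνe : ∀ T ∈ C.powerset, 0 ≤ ν (insert e T) := fun T hT =>
    contract_nonneg ν hν he T (powerset_mono.2 (erase_subset f _) hT)
  have hνf : ∀ T ∈ C.powerset, 0 ≤ ν (insert f T) :=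
    contract_nonneg ν (fun T hT => hν T (powerset_mono.2 (erase_subset e A) hT)) hf
  have hνef : ∀ T ∈ C.powerset, 0 ≤ ν (insert e (insert f T)) := fun T hT =>
    contract_nonneg ν hν he _
      (mem_powerset.2 (insert_subset hf ((mem_powerset.1 hT).trans (erase_subset f _))))
  set Ka := ∑ T ∈ C.powerset, ν (insert e T)
  set Kd := ∑ T ∈ C.powerset, ν (insert f T)
  obtain ⟨ε, hε0, hε1, hεK⟩ := exists_pos_le_one_mul_lt (mul_pos h0 hpos)
    (mul_nonneg (sum_nonneg hνe) (sum_nonneg hνf))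
  have hbc := hR.lZ_mul_lZ_le (w := fun _ => ε) (fun _ _ => hε0)
    (lZ_pos _ _ hν h0 fun _ _ => hε0.le) he hf
  simp only [lZ_const] at hbc
  have hb : ν (insert e (insert f R)) * ε ^ R.card ≤
      ∑ T ∈ C.powerset, ν (insert e (insert f T)) * ε ^ T.card :=
    single_le_sum (f := fun T => ν (insert e (insert f T)) * ε ^ T.card)
      (fun T hT => mul_nonneg (hνef T hT) (by positivity)) hRC
  have hc : ν ∅ ≤ ∑ T ∈ C.powerset, ν T * ε ^ T.card := by
    simpa using single_le_sum (f := fun T => ν T * ε ^ T.card)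
      (fun T hT => mul_nonneg (hνC T hT) (by positivity)) (empty_mem_powerset C)
  have ha : ∑ T ∈ C.powerset, ν (insert e T) * ε ^ T.card ≤ ε ^ (R.card + 1) * Ka :=
    sum_mul_pow_le_pow_mul_sum hνe hε0.le hε1 fun T hT hT0 =>
      hmin T hT ((hνe T hT).lt_of_ne' hT0)
  have hd : ∑ T ∈ C.powerset, ν (insert f T) * ε ^ T.card ≤ Kd := by
    simpa using sum_mul_pow_le_pow_mul_sum (n := 0) hνf hε0.le hε1 fun _ _ _ => Nat.zero_le _
  have hchain : ε ^ R.card * (ν ∅ * ν (insert e (insert f R))) ≤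
      ε ^ R.card * (ε * (Ka * Kd)) :=
    calc ε ^ R.card * (ν ∅ * ν (insert e (insert f R)))
        = (ν (insert e (insert f R)) * ε ^ R.card) * ν ∅ := by ring
      _ ≤ _ := mul_le_mul hb hc h0.le
          (sum_nonneg fun T hT => mul_nonneg (hνef T hT) (by positivity))
      _ ≤ _ := hbc
      _ ≤ ε ^ (R.card + 1) * Ka * Kd := mul_le_mul ha hd
          (sum_nonneg fun T hT => mul_nonneg (hνf T hT) (by positivity))
          (mul_nonneg (by positivity) (sum_nonneg hνe))
      _ = ε ^ R.card * (ε * (Ka * Kd)) := by ring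
  linarith [le_of_mul_le_mul_left hchain (by positivity)]

lemma lRayleigh.exists_pos_card_lt (hν : ∀ S ∈ A.powerset, 0 ≤ ν S) (h0 : 0 < ν ∅)
    (hR : lRayleigh A ν) (hS : S ∈ A.powerset) (heS : e ∈ S) (hpos : 0 < ν S)
    (hne : S ≠ {e}) : ∃ T ∈ A.powerset, e ∈ T ∧ 0 < ν T ∧ T.card < S.card := by
  have he : e ∈ A := mem_powerset.1 hS heS
  obtain ⟨f, hfS, hfe⟩ : ∃ f ∈ S, f ≠ e := by
    by_contra! h
    exact hne (eq_singleton_iff_unique_mem.2 ⟨heS, h⟩)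
  have hf : f ∈ A.erase e := mem_erase.2 ⟨hfe, mem_powerset.1 hS hfS⟩
  set R := (S.erase e).erase f
  have hRC : R ∈ ((A.erase e).erase f).powerset :=
    mem_powerset.2 (erase_subset_erase f (erase_subset_erase e (mem_powerset.1 hS)))
  have hSR : insert e (insert f R) = S := by
    rw [insert_erase (mem_erase.2 ⟨hfe, hfS⟩), insert_erase heS]
  have hcard : S.card = R.card + 2 := by
    have heR : e ∉ insert f R := by
      simp only [mem_insert, hfe.symm, false_or, R]
      exact fun h => notMem_erase e S (mem_of_mem_erase h)
    rw [← hSR, card_insert_of_notMem heR, card_insert_of_notMem (notMem_erase f _)]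
  obtain ⟨T, hT, hTpos, hTR⟩ := hR.exists_pos_insert_card_le hν h0 he hf hRC (hSR ▸ hpos)
  refine ⟨insert e T, mem_powerset.2 (insert_subset he ((mem_powerset.1 hT).trans
    ((erase_subset f _).trans (erase_subset e A)))), mem_insert_self e T, hTpos, ?_⟩
  have := card_insert_le e T
  omega

lemma lCavityMonotone.singleton_pos {A : Finset V} (h : lCavityMonotone A ν) (he : e ∈ A) :
    0 < ν {e} := by
  obtain ⟨hν, h0, hR, hSI⟩ := h
  obtain ⟨S, hS, hmin⟩ := exists_min_image (A.powerset.filter fun S => e ∈ S ∧ 0 < ν S) card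
    (by simpa [Finset.Nonempty] using hSI.exists_mem_pos hν he)
  obtain ⟨hSA, heS, hpos⟩ := by simpa using hS
  by_cases hne : S = {e}
  · exact hne ▸ hpos
  obtain ⟨T, hT, heT, hTpos, hlt⟩ := hR.exists_pos_card_lt hν h0 (mem_powerset.2 hSA) heS hpos hne
  exact absurd (hmin T (by simpa using ⟨mem_powerset.1 hT, heT, hTpos⟩)) (not_le.2 hlt)

end Singletons

section Comparison

variable {V : Type*} (G : SimpleGraph V)

def AntitoneOnPos (Φ : (V → V → ℝ) → V → V → ℝ) : Prop :=
  ∀ y y' : V → V → ℝ, (∀ i j, G.Adj i j → 0 < y i j) →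
    (∀ i j, G.Adj i j → y i j ≤ y' i j) → ∀ i j, G.Adj i j → Φ y' i j ≤ Φ y i j

def StrictMonoSmulOnPos (Φ : (V → V → ℝ) → V → V → ℝ) : Prop :=
  ∀ y : V → V → ℝ, (∀ i j, G.Adj i j → 0 < y i j) →
    ∀ i j, G.Adj i j → StrictMonoOn (fun r : ℝ => r * Φ (r • y) i j) (Set.Ioi 0)

variable {G} {Φ : (V → V → ℝ) → V → V → ℝ} {s t ρ σ τ : ℝ} {y z : V → V → ℝ} {i j : V}

lemma mul_mul_le_of_smul_le (hanti : AntitoneOnPos G Φ) (hmono : StrictMonoSmulOnPos G Φ)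
    (hs : 0 < s) (ht : 0 < t) (hz : ∀ i j, G.Adj i j → 0 < z i j) (hij : G.Adj i j)
    (hyfix : y i j = s * Φ y i j) (hzfix : z i j = t * Φ z i j)
    (hτ0 : 0 < τ) (hτ1 : τ ≤ 1) (hτ : ∀ i j, G.Adj i j → τ * z i j ≤ y i j)
    (hρ : y i j = ρ * z i j) : ρ * τ * t ≤ s := by
  have h1 : Φ y i j ≤ Φ (τ • z) i j :=
    hanti (τ • z) y (fun i j h => mul_pos hτ0 (hz i j h)) hτ i j hij
  have h2 : τ * Φ (τ • z) i j ≤ Φ z i j := by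
    simpa using (hmono z hz i j hij).monotoneOn hτ0 (Set.mem_Ioi.2 one_pos) hτ1
  refine le_of_mul_le_mul_right ?_ (hz i j hij)
  calc ρ * τ * t * z i j = t * τ * y i j := by rw [hρ]; ring
    _ = t * s * (τ * Φ y i j) := by rw [hyfix]; ring
    _ ≤ t * s * Φ z i j := by gcongr; exact (mul_le_mul_of_nonneg_left h1 hτ0.le).trans h2
    _ = s * z i j := by rw [hzfix]; ring

lemma lt_mul_mul_of_le_smul (hanti : AntitoneOnPos G Φ) (hmono : StrictMonoSmulOnPos G Φ)
    (hs : 0 < s) (ht : 0 < t) (hy : ∀ i j, G.Adj i j → 0 < y i j)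
    (hz : ∀ i j, G.Adj i j → 0 < z i j) (hij : G.Adj i j)
    (hyfix : y i j = s * Φ y i j) (hzfix : z i j = t * Φ z i j)
    (hρ1 : 1 < ρ) (hρ : ∀ i j, G.Adj i j → y i j ≤ ρ * z i j)
    (hσ : y i j = σ * z i j) : s < ρ * σ * t := by
  have h1 : Φ (ρ • z) i j ≤ Φ y i j := hanti y (ρ • z) hy hρ i j hij
  have h2 : Φ z i j < ρ * Φ (ρ • z) i j := by
    simpa using hmono z hz i j hij (Set.mem_Ioi.2 one_pos)
      (Set.mem_Ioi.2 (zero_lt_one.trans hρ1)) hρ1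
  refine lt_of_mul_lt_mul_right ?_ (hz i j hij).le
  calc s * z i j = t * s * Φ z i j := by rw [hzfix]; ring
    _ < t * s * (ρ * Φ (ρ • z) i j) := by gcongr
    _ ≤ t * s * (ρ * Φ y i j) := by gcongr
    _ = ρ * t * y i j := by rw [hyfix]; ring
    _ = ρ * σ * t * z i j := by rw [hσ]; ring

/- Compare the extreme values `ρ ≥ σ` of `y / z` over the oriented edges.  If `ρ > 1`, the
edge attaining `ρ` gives `ρ · min σ 1 · t ≤ s`, while the edge attaining `σ` gives
`s < ρ σ t`; together with `s ≤ t` these are incompatible. -/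
theorem le_of_fixedPoints [Finite V] (hanti : AntitoneOnPos G Φ)
    (hmono : StrictMonoSmulOnPos G Φ) (hs : 0 < s) (hst : s ≤ t)
    (hy : ∀ i j, G.Adj i j → 0 < y i j) (hz : ∀ i j, G.Adj i j → 0 < z i j)
    (hyfix : ∀ i j, G.Adj i j → y i j = s * Φ y i j)
    (hzfix : ∀ i j, G.Adj i j → z i j = t * Φ z i j) :
    ∀ i j, G.Adj i j → y i j ≤ z i j := by
  intro i₀ j₀ h₀
  have ht : 0 < t := hs.trans_le hst
  set ratio := fun p : V × V => y p.1 p.2 / z p.1 p.2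
  have hP : {p : V × V | G.Adj p.1 p.2}.Nonempty := ⟨(i₀, j₀), h₀⟩
  obtain ⟨⟨iM, jM⟩, hM, hmax⟩ := Set.exists_max_image _ ratio (Set.toFinite _) hP
  obtain ⟨⟨im, jm⟩, hm, hmin⟩ := Set.exists_min_image _ ratio (Set.toFinite _) hP
  set ρ := ratio (iM, jM)
  set σ := ratio (im, jm)
  have hyρ : ∀ i j, G.Adj i j → y i j ≤ ρ * z i j := fun i j h =>
    (div_le_iff₀ (hz i j h)).1 (hmax (i, j) h)
  have hyσ : ∀ i j, G.Adj i j → σ * z i j ≤ y i j := fun i j h =>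
    (le_div_iff₀ (hz i j h)).1 (hmin (i, j) h)
  suffices hρ : ρ ≤ 1 from (hyρ i₀ j₀ h₀).trans (by nlinarith [hz i₀ j₀ h₀])
  by_contra! hρ
  have hσ : 0 < σ := div_pos (hy im jm hm) (hz im jm hm)
  have hmaxpair : ρ * min σ 1 * t ≤ s :=
    mul_mul_le_of_smul_le hanti hmono hs ht hz hM (hyfix iM jM hM) (hzfix iM jM hM)
      (lt_min hσ one_pos) (min_le_right σ 1)
      (fun i j h => (mul_le_mul_of_nonneg_right (min_le_left σ 1) (hz i j h).le).trans (hyσ i j h))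
      (div_mul_cancel₀ _ (hz iM jM hM).ne').symm
  have hminpair : s < ρ * σ * t :=
    lt_mul_mul_of_le_smul hanti hmono hs ht hy hz hm (hyfix im jm hm) (hzfix im jm hm) hρ hyρ
      (div_mul_cancel₀ _ (hz im jm hm).ne').symm
  rcases le_total σ 1 with hσ1 | hσ1
  · rw [min_eq_left hσ1] at hmaxpair
    linarith
  · rw [min_eq_right hσ1] at hmaxpair
    nlinarith

theorem div_mul_le_of_fixedPoints (hanti : AntitoneOnPos G Φ) (hs : 0 < s) (ht : 0 < t)
    (hy : ∀ i j, G.Adj i j → 0 < y i j) (hyz : ∀ i j, G.Adj i j → y i j ≤ z i j)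
    (hyfix : ∀ i j, G.Adj i j → y i j = s * Φ y i j)
    (hzfix : ∀ i j, G.Adj i j → z i j = t * Φ z i j) :
    ∀ i j, G.Adj i j → s / t * z i j ≤ y i j := fun i j h =>
  calc s / t * z i j = s * Φ z i j := by rw [hzfix i j h]; field_simp
    _ ≤ s * Φ y i j := mul_le_mul_of_nonneg_left (hanti y z hy hyz i j h) hs.le
    _ = y i j := (hyfix i j h).symm

end Comparison

section CavityOperator

variable {V : Type*} [Fintype V] [DecidableEq V] (G : SimpleGraph V) [DecidableRel G.Adj]
  {μ : V → Finset V → ℝ} {y : V → V → ℝ} {i j : V}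

lemma cavOp_pos (hcm : ∀ i, lCavityMonotone (G.neighborFinset i) (μ i))
    (hy : ∀ k i, G.Adj k i → 0 ≤ y k i) (hij : G.Adj i j) : 0 < cavOp G μ y i j :=
  have hj : j ∈ G.neighborFinset i := (G.mem_neighborFinset i j).2 hij
  lGamma_pos (hcm i).1 (hcm i).2.1 hj ((hcm i).singleton_pos hj) fun k hk =>
    hy k i ((G.mem_neighborFinset i k).1 (mem_of_mem_erase hk)).symm

lemma cavOp_antitoneOnPos (hcm : ∀ i, lCavityMonotone (G.neighborFinset i) (μ i)) :
    AntitoneOnPos G (cavOp G μ) :=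
  fun _ _ hy hle i j hij =>
    lGamma_antitone (hcm i).1 (hcm i).2.1 (hcm i).2.2.1 ((G.mem_neighborFinset i j).2 hij)
      (fun k hk => hy k i ((G.mem_neighborFinset i k).1 hk).symm)
      (fun k hk => hle k i ((G.mem_neighborFinset i k).1 hk).symm)

lemma cavOp_strictMonoSmulOnPos (hcm : ∀ i, lCavityMonotone (G.neighborFinset i) (μ i)) :
    StrictMonoSmulOnPos G (cavOp G μ) :=
  fun y hy i j hij =>
    lGamma_smul_strictMonoOn (hcm i).1 (hcm i).2.1 (hcm i).2.2.2 ((G.mem_neighborFinset i j).2 hij)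
      (w := fun k => y k i) fun k hk => hy k i ((G.mem_neighborFinset i k).1 hk).symm

end CavityOperator

lemma continuousOn_Ioi_of_monotoneOn_of_antitoneOn_div {f : ℝ → ℝ}
    (hf : MonotoneOn f (Set.Ioi 0)) (hg : AntitoneOn (fun t => f t / t) (Set.Ioi 0)) :
    ContinuousOn f (Set.Ioi 0) := by
  intro t₀ ht₀
  have ht₀' : 0 < t₀ := ht₀
  have hbound : ∀ u ∈ Set.Ioi (0 : ℝ), ‖f u - f t₀‖ ≤ |f t₀| / t₀ * |u - t₀| := by
    intro u hu
    have hu' : 0 < u := hu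
    rw [Real.norm_eq_abs, div_mul_eq_mul_div, le_div_iff₀ ht₀']
    rcases le_total u t₀ with h | h
    · have h1 := hf hu ht₀ h
      have h2 := (div_le_div_iff₀ ht₀' hu').1 (hg hu ht₀ h)
      rw [abs_of_nonpos (a := f u - f t₀) (by linarith), abs_of_nonpos (a := u - t₀) (by linarith)]
      nlinarith [mul_nonneg (sub_nonneg.2 (le_abs_self (f t₀))) (sub_nonneg.2 h)]
    · have h1 := hf ht₀ hu h
      have h2 := (div_le_div_iff₀ hu' ht₀').1 (hg ht₀ hu h)
      rw [abs_of_nonneg (a := f u - f t₀) (by linarith), abs_of_nonneg (a := u - t₀) (by linarith)]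
      nlinarith [mul_nonneg (sub_nonneg.2 (le_abs_self (f t₀))) (sub_nonneg.2 h)]
  rw [ContinuousWithinAt, tendsto_iff_norm_sub_tendsto_zero]
  refine squeeze_zero' (Eventually.of_forall fun _ => norm_nonneg _)
    (eventually_nhdsWithin_of_forall hbound) ?_
  have hcont : Continuous fun u : ℝ => |f t₀| / t₀ * |u - t₀| := by fun_prop
  simpa using (hcont.tendsto t₀).mono_left nhdsWithin_le_nhds

theorem stmt17_general {V : Type*} [Fintype V] [DecidableEq V] (G : SimpleGraph V)
    [DecidableRel G.Adj] (μ : V → Finset V → ℝ)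
    (hcm : ∀ i : V, lCavityMonotone (G.neighborFinset i) (μ i))
    (x : ℝ → V → V → ℝ)
    (hxnn : ∀ t : ℝ, 0 < t → ∀ i j, 0 ≤ x t i j)
    (hxfix : ∀ t : ℝ, 0 < t → ∀ i j, G.Adj i j → x t i j = t * cavOp G μ (x t) i j) :
    (∀ i j, G.Adj i j → MonotoneOn (fun t : ℝ => x t i j) (Set.Ioi 0)) ∧
    (∀ i j, G.Adj i j → AntitoneOn (fun t : ℝ => x t i j / t) (Set.Ioi 0)) ∧
    (∀ s t : ℝ, 0 < s → s ≤ t → ∀ i j, G.Adj i j →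
      s / t * x t i j ≤ x s i j ∧ x s i j ≤ x t i j) ∧
    (∀ i j, G.Adj i j → ContinuousOn (fun t : ℝ => x t i j) (Set.Ioi 0)) := by
  have hpos : ∀ t : ℝ, 0 < t → ∀ i j, G.Adj i j → 0 < x t i j := fun t ht i j hij => by
    rw [hxfix t ht i j hij]
    exact mul_pos ht (cavOp_pos G hcm (fun k i _ => hxnn t ht k i) hij)
  have hanti := cavOp_antitoneOnPos G hcm
  have hle : ∀ s t : ℝ, 0 < s → s ≤ t → ∀ i j, G.Adj i j → x s i j ≤ x t i j :=
    fun s t hs hst => le_of_fixedPoints hanti (cavOp_strictMonoSmulOnPos G hcm) hs hst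
      (hpos s hs) (hpos t (hs.trans_le hst)) (hxfix s hs) (hxfix t (hs.trans_le hst))
  have hlow : ∀ s t : ℝ, 0 < s → s ≤ t → ∀ i j, G.Adj i j → s / t * x t i j ≤ x s i j :=
    fun s t hs hst => div_mul_le_of_fixedPoints hanti hs (hs.trans_le hst) (hpos s hs)
      (hle s t hs hst) (hxfix s hs) (hxfix t (hs.trans_le hst))
  have hdiv : ∀ i j, G.Adj i j → AntitoneOn (fun t : ℝ => x t i j / t) (Set.Ioi 0) :=
    fun i j hij s hs t ht hst => by
      have h := hlow s t hs hst i j hij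
      rw [div_mul_eq_mul_div, div_le_iff₀ ht] at h
      rw [div_le_div_iff₀ ht hs]
      linarith
  exact ⟨fun i j hij s hs t _ hst => hle s t hs hst i j hij, hdiv,
    fun s t hs hst i j hij => ⟨hlow s t hs hst i j hij, hle s t hs hst i j hij⟩,
    fun i j hij => continuousOn_Ioi_of_monotoneOn_of_antitoneOn_div
      (fun s hs t _ hst => hle s t hs hst i j hij) (hdiv i j hij)⟩

/-- on a finite cavity-monotone network, the solution `x(t)` of the cavity
equation is coordinatewise nondecreasing in `t`, `x(t)/t` is nonincreasing, whence
`(s/t)x(t) ≤ x(s) ≤ x(t)` for `0 < s ≤ t` and `t ↦ x(t)` is continuous on `(0,∞)`. -/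
theorem stmt17 {V : Type*} [Fintype V] [DecidableEq V] (G : SimpleGraph V)
    [DecidableRel G.Adj] (μ : V → Finset V → ℝ)
    (hcm : ∀ i : V, lCavityMonotone (G.neighborFinset i) (μ i))
    (x : ℝ → V → V → ℝ)
    (hxnn : ∀ t : ℝ, 0 < t → ∀ i j, 0 ≤ x t i j)
    (hxfix : ∀ t : ℝ, 0 < t → ∀ i j, G.Adj i j → x t i j = t * cavOp G μ (x t) i j)
    (hxuniq : ∀ t : ℝ, 0 < t → ∀ y : V → V → ℝ, (∀ i j, 0 ≤ y i j) →
      (∀ i j, G.Adj i j → y i j = t * cavOp G μ y i j) →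
      ∀ i j, G.Adj i j → y i j = x t i j) :
    (∀ i j, G.Adj i j → MonotoneOn (fun t : ℝ => x t i j) (Set.Ioi 0)) ∧
    (∀ i j, G.Adj i j → AntitoneOn (fun t : ℝ => x t i j / t) (Set.Ioi 0)) ∧
    (∀ s t : ℝ, 0 < s → s ≤ t → ∀ i j, G.Adj i j →
      s / t * x t i j ≤ x s i j ∧ x s i j ≤ x t i j) ∧
    (∀ i j, G.Adj i j → ContinuousOn (fun t : ℝ => x t i j) (Set.Ioi 0)) :=
  stmt17_general G μ hcm x hxnn hxfix
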